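/- arXiv:1403.0895 — 4 statements merged into one kernel-verified Lean document; each statement's English description precedes it below -/
import Mathlib

section
/- Let (η_k)_{k∈ℕ}, (d_k)_{k∈ℕ}, and (E_k)_{k∈ℕ} be sequences of nonnegative real numbers, and let μ ∈ [0,1), γ ≥ 0, c ≥ 0, C_u ≥ 0 be constants such that: (i) η_{k+1} ≤ μ·η_k + γ·d_k for all k ∈ ℕ (estimator reduction); (ii) ∑_{k=ℓ}^{N} d_k ≤ c·E_ℓ for all natural numbers ℓ ≤ N (general quasi-orthogonality); (iii) E_ℓ ≤ C_u·η_ℓ for all ℓ ∈ ℕ (global reliability). Set C = γ·c·C_u and ρ = (μ+C)/(1+C). Then ρ < 1 and η_k ≤ ((1+C)/(1−μ))·ρ^{k−ℓ}·η_ℓ for all natural numbers k ≥ ℓ. -/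
/-!
Work with the tail sums `S m = ∑_{j=m}^{N} η j` of a fixed horizon `N`. Summing the estimator
reduction over `j ∈ [m, N]` and bounding `∑ d j` by quasi-orthogonality and reliability gives
`S (m + 1) ≤ μ S m + C η m`. Since `S m = η m + S (m + 1)`, this one inequality says both
`(1 - μ) S m ≤ (1 + C) η m` and `(1 + C) S (m + 1) ≤ (μ + C) S m`. Iterating the contraction from
`ℓ` to `k` with `N = k`, where `S k = η k`, gives the claim.
-/

open Finset

section TailSums

variable {a : ℕ → ℝ} {μ C : ℝ}

lemma sum_Icc_add_one_le_of_le_mul_add {b : ℕ → ℝ} {γ : ℝ}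
    (h : ∀ k, a (k + 1) ≤ μ * a k + γ * b k) (m N : ℕ) :
    ∑ j ∈ Icc (m + 1) (N + 1), a j ≤ μ * ∑ j ∈ Icc m N, a j + γ * ∑ j ∈ Icc m N, b j := by
  rw [← map_add_right_Icc, sum_map, mul_sum, mul_sum, ← sum_add_distrib]
  exact sum_le_sum fun j _ => h j

variable {m N : ℕ}

lemma sum_Icc_le_of_tail_le (hμ1 : μ < 1) (hmN : m ≤ N)
    (h : ∑ j ∈ Icc (m + 1) N, a j ≤ μ * ∑ j ∈ Icc m N, a j + C * a m) :
    ∑ j ∈ Icc m N, a j ≤ (1 + C) / (1 - μ) * a m := by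
  rw [← add_sum_Ioc_eq_sum_Icc hmN, ← Icc_add_one_left_eq_Ioc] at *
  rw [div_mul_eq_mul_div, le_div_iff₀ (by linarith)]
  linarith

lemma sum_Icc_add_one_le_of_tail_le (hC : 0 ≤ C) (hmN : m ≤ N)
    (h : ∑ j ∈ Icc (m + 1) N, a j ≤ μ * ∑ j ∈ Icc m N, a j + C * a m) :
    ∑ j ∈ Icc (m + 1) N, a j ≤ (μ + C) / (1 + C) * ∑ j ∈ Icc m N, a j := by
  rw [← add_sum_Ioc_eq_sum_Icc hmN, ← Icc_add_one_left_eq_Ioc] at *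
  rw [div_mul_eq_mul_div, le_div_iff₀ (by linarith)]
  linarith

theorem le_geometric_of_tail_le (ha : ∀ k, 0 ≤ a k) (hμ0 : 0 ≤ μ) (hμ1 : μ < 1) (hC : 0 ≤ C)
    (htail : ∀ m N, m ≤ N →
      ∑ j ∈ Icc (m + 1) (N + 1), a j ≤ μ * ∑ j ∈ Icc m N, a j + C * a m)
    {ℓ k : ℕ} (hℓk : ℓ ≤ k) :
    a k ≤ (1 + C) / (1 - μ) * ((μ + C) / (1 + C)) ^ (k - ℓ) * a ℓ := by
  have hstep : ∀ m ≤ k, ∑ j ∈ Icc (m + 1) k, a j ≤ μ * ∑ j ∈ Icc m k, a j + C * a m :=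
    fun m hm => (sum_le_sum_of_subset_of_nonneg (Icc_subset_Icc_right k.le_succ)
      fun j _ _ => ha j).trans (htail m k hm)
  have hgeo := le_geom (u := fun i => ∑ j ∈ Icc (ℓ + i) k, a j) (by positivity) (k - ℓ)
    fun i hi => sum_Icc_add_one_le_of_tail_le (m := ℓ + i) hC (by omega) (hstep _ (by omega))
  simp only [add_zero, Nat.add_sub_cancel' hℓk, Icc_self, sum_singleton] at hgeo
  calc a k ≤ ((μ + C) / (1 + C)) ^ (k - ℓ) * ∑ j ∈ Icc ℓ k, a j := hgeo
    _ ≤ ((μ + C) / (1 + C)) ^ (k - ℓ) * ((1 + C) / (1 - μ) * a ℓ) := by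
        gcongr
        exact sum_Icc_le_of_tail_le hμ1 hℓk (hstep ℓ hℓk)
    _ = _ := by ring

end TailSums

theorem stmt_3_general (η d E : ℕ → ℝ) (μ γ c Cu : ℝ)
    (hη : ∀ k, 0 ≤ η k)
    (hμ0 : 0 ≤ μ) (hμ1 : μ < 1) (hγ : 0 ≤ γ) (hc : 0 ≤ c) (hCu : 0 ≤ Cu)
    (hred : ∀ k, η (k + 1) ≤ μ * η k + γ * d k)
    (hqo : ∀ ℓ N : ℕ, ℓ ≤ N → ∑ k ∈ Finset.Icc ℓ N, d k ≤ c * E ℓ)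
    (hrel : ∀ ℓ, E ℓ ≤ Cu * η ℓ) :
    (μ + γ * c * Cu) / (1 + γ * c * Cu) < 1 ∧
      ∀ ℓ k : ℕ, ℓ ≤ k →
        η k ≤ ((1 + γ * c * Cu) / (1 - μ)) *
          ((μ + γ * c * Cu) / (1 + γ * c * Cu)) ^ (k - ℓ) * η ℓ := by
  have hC : 0 ≤ γ * c * Cu := by positivity
  refine ⟨(div_lt_one (by linarith)).2 (by linarith), fun ℓ k hℓk => ?_⟩
  refine le_geometric_of_tail_le hη hμ0 hμ1 hC (fun m N hmN => ?_) hℓk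
  have hsum_d : ∑ j ∈ Icc m N, d j ≤ c * Cu * η m := calc
    ∑ j ∈ Icc m N, d j ≤ c * E m := hqo m N hmN
    _ ≤ c * (Cu * η m) := by gcongr; exact hrel m
    _ = c * Cu * η m := by ring
  calc ∑ j ∈ Icc (m + 1) (N + 1), η j
      ≤ μ * ∑ j ∈ Icc m N, η j + γ * ∑ j ∈ Icc m N, d j :=
        sum_Icc_add_one_le_of_le_mul_add hred m N
    _ ≤ μ * ∑ j ∈ Icc m N, η j + γ * (c * Cu * η m) := by gcongr
    _ = μ * ∑ j ∈ Icc m N, η j + γ * c * Cu * η m := by ring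

/-- abstract conditional geometric error reduction. From estimator reduction,
general quasi-orthogonality, and global reliability, the estimator sequence decays
geometrically with rate `ρ = (μ + C)/(1 + C)` where `C = γ * c * Cu`. -/
theorem stmt_3 (η d E : ℕ → ℝ) (μ γ c Cu : ℝ)
    (hη : ∀ k, 0 ≤ η k) (hd : ∀ k, 0 ≤ d k) (hE : ∀ k, 0 ≤ E k)
    (hμ0 : 0 ≤ μ) (hμ1 : μ < 1) (hγ : 0 ≤ γ) (hc : 0 ≤ c) (hCu : 0 ≤ Cu)
    (hred : ∀ k, η (k + 1) ≤ μ * η k + γ * d k)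
    (hqo : ∀ ℓ N : ℕ, ℓ ≤ N → ∑ k ∈ Finset.Icc ℓ N, d k ≤ c * E ℓ)
    (hrel : ∀ ℓ, E ℓ ≤ Cu * η ℓ) :
    (μ + γ * c * Cu) / (1 + γ * c * Cu) < 1 ∧
      ∀ ℓ k : ℕ, ℓ ≤ k →
        η k ≤ ((1 + γ * c * Cu) / (1 - μ)) *
          ((μ + γ * c * Cu) / (1 + γ * c * Cu)) ^ (k - ℓ) * η ℓ :=
  stmt_3_general η d E μ γ c Cu hη hμ0 hμ1 hγ hc hCu hred hqo hrel
end

section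
/- Let (η_k)_{k∈ℕ} be a sequence of nonnegative real numbers, and let μ ∈ [0,1) and C ≥ 0 be constants such that ∑_{k=ℓ}^{N} η_{k+1} ≤ μ·∑_{k=ℓ}^{N} η_k + C·η_ℓ for all natural numbers ℓ ≤ N. Then the series ∑_{k=0}^{∞} η_k converges, and its tails α_ℓ = ∑_{k=ℓ}^{∞} η_k satisfy α_ℓ ≤ ((1+C)/(1−μ))·η_ℓ for every ℓ ∈ ℕ. -/
/-!
Writing `S` for a partial sum `∑_{k=ℓ}^{N} η_k`, the shifted sum on the left of the hypothesis is
`S + η_{N+1} - η_ℓ ≥ S - η_ℓ`, so the hypothesis gives `(1 - μ) S ≤ (1 + C) η_ℓ`. The partial sums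
of the nonnegative tail `(η_{ℓ+i})_i` are therefore bounded by `(1 + C) / (1 - μ) · η_ℓ`, which
gives both summability and the tail estimate.
-/

open Finset

theorem Finset.sum_range_succ_add_eq_sum_Icc {M : Type*} [AddCommMonoid M] (f : ℕ → M)
    (ℓ n : ℕ) : ∑ i ∈ range (n + 1), f (i + ℓ) = ∑ k ∈ Icc ℓ (n + ℓ), f k := by
  rw [range_eq_Ico, sum_Ico_add', zero_add, Nat.add_right_comm, Ico_add_one_right_eq_Icc]

section ShiftedSumBound

variable {a : ℕ → ℝ} {μ C : ℝ}

theorem sum_range_succ_le_of_sum_shift_le (ha : ∀ i, 0 ≤ a i) (hμ : μ < 1)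
    (h : ∀ n, ∑ i ∈ range (n + 1), a (i + 1) ≤ μ * ∑ i ∈ range (n + 1), a i + C * a 0)
    (n : ℕ) : ∑ i ∈ range (n + 1), a i ≤ (1 + C) / (1 - μ) * a 0 := by
  have hshift : ∑ i ∈ range (n + 1), a (i + 1) = ∑ i ∈ range (n + 1), a i + a (n + 1) - a 0 := by
    linarith [sum_range_succ' a (n + 1), sum_range_succ a (n + 1)]
  have hbound : (1 - μ) * ∑ i ∈ range (n + 1), a i ≤ (1 + C) * a 0 := by
    linarith [h n, ha (n + 1)]
  rwa [div_mul_eq_mul_div, le_div_iff₀ (sub_pos.mpr hμ), mul_comm]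

theorem summable_and_tsum_le_of_sum_shift_le (ha : ∀ i, 0 ≤ a i) (hμ : μ < 1)
    (h : ∀ n, ∑ i ∈ range (n + 1), a (i + 1) ≤ μ * ∑ i ∈ range (n + 1), a i + C * a 0) :
    Summable a ∧ ∑' i, a i ≤ (1 + C) / (1 - μ) * a 0 := by
  have hpartial (n : ℕ) : ∑ i ∈ range n, a i ≤ (1 + C) / (1 - μ) * a 0 :=
    calc ∑ i ∈ range n, a i
        ≤ ∑ i ∈ range (n + 1), a i := by simpa [sum_range_succ] using ha n
      _ ≤ (1 + C) / (1 - μ) * a 0 := sum_range_succ_le_of_sum_shift_le ha hμ h n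
  exact ⟨summable_of_sum_range_le ha hpartial, Real.tsum_le_of_sum_range_le ha hpartial⟩

end ShiftedSumBound

theorem stmt_4_general (η : ℕ → ℝ) (μ C : ℝ)
    (hη : ∀ k, 0 ≤ η k) (hμ1 : μ < 1)
    (hsum : ∀ ℓ N : ℕ, ℓ ≤ N →
      ∑ k ∈ Finset.Icc ℓ N, η (k + 1) ≤ μ * ∑ k ∈ Finset.Icc ℓ N, η k + C * η ℓ) :
    Summable η ∧ ∀ ℓ : ℕ, (∑' k : ℕ, η (k + ℓ)) ≤ ((1 + C) / (1 - μ)) * η ℓ := by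
  have htail (ℓ : ℕ) :
      Summable (fun k ↦ η (k + ℓ)) ∧ ∑' k, η (k + ℓ) ≤ (1 + C) / (1 - μ) * η ℓ := by
    have hshift (n : ℕ) : ∑ i ∈ range (n + 1), η (i + 1 + ℓ)
        ≤ μ * ∑ i ∈ range (n + 1), η (i + ℓ) + C * η (0 + ℓ) := by
      simp only [zero_add, Nat.add_right_comm _ 1 ℓ]
      rw [sum_range_succ_add_eq_sum_Icc (fun k ↦ η (k + 1)), sum_range_succ_add_eq_sum_Icc η]
      exact hsum ℓ (n + ℓ) (Nat.le_add_left ℓ n)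
    simpa using
      summable_and_tsum_le_of_sum_shift_le (a := fun k ↦ η (k + ℓ)) (fun k ↦ hη _) hμ1 hshift
  exact ⟨by simpa using (htail 0).1, fun ℓ ↦ (htail ℓ).2⟩

/-- tail-summability estimate. If
`∑_{k=ℓ}^{N} η_{k+1} ≤ μ * ∑_{k=ℓ}^{N} η_k + C * η_ℓ` for all `ℓ ≤ N`, with `μ ∈ [0,1)`
and `C ≥ 0`, then `∑ η_k` converges and the tails `α_ℓ = ∑_{k=ℓ}^∞ η_k` satisfy
`α_ℓ ≤ ((1+C)/(1-μ)) * η_ℓ`. -/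
theorem stmt_4 (η : ℕ → ℝ) (μ C : ℝ)
    (hη : ∀ k, 0 ≤ η k) (hμ0 : 0 ≤ μ) (hμ1 : μ < 1) (hC : 0 ≤ C)
    (hsum : ∀ ℓ N : ℕ, ℓ ≤ N →
      ∑ k ∈ Finset.Icc ℓ N, η (k + 1) ≤ μ * ∑ k ∈ Finset.Icc ℓ N, η k + C * η ℓ) :
    Summable η ∧ ∀ ℓ : ℕ, (∑' k : ℕ, η (k + ℓ)) ≤ ((1 + C) / (1 - μ)) * η ℓ :=
  stmt_4_general η μ C hη hμ1 hsum
end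

section
/- Let (η_k)_{k∈ℕ} be a sequence of nonnegative real numbers, and let μ ∈ [0,1) and C ≥ 0 be constants such that ∑_{k=ℓ}^{N} η_{k+1} ≤ μ·∑_{k=ℓ}^{N} η_k + C·η_ℓ for all natural numbers ℓ ≤ N. Then the tails α_ℓ = ∑_{k=ℓ}^{∞} η_k (which are finite) satisfy α_{ℓ+1} ≤ ((μ+C)/(1+C))·α_ℓ for every ℓ ∈ ℕ. -/
/-!
Write `α_ℓ = ∑_{k ≥ ℓ} η_k`. Taking `ℓ = 0` in the hypothesis and using that the partial sums
increase, `(1 - μ) ∑_{k ≤ N} η_k ≤ (1 + C) η_0`, so `η` is summable. Letting `N → ∞` then gives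
`α_{ℓ+1} ≤ μ α_ℓ + C η_ℓ`, and substituting `η_ℓ = α_ℓ - α_{ℓ+1}` yields
`(1 + C) α_{ℓ+1} ≤ (μ + C) α_ℓ`.
-/

open Finset Filter

theorem Finset.sum_Icc_add_eq_sum_range {M : Type*} [AddCommMonoid M] (f : ℕ → M) (ℓ n : ℕ) :
    ∑ k ∈ Icc ℓ (ℓ + n), f k = ∑ i ∈ range (n + 1), f (i + ℓ) := by
  rw [← Ico_add_one_right_eq_Icc, sum_Ico_eq_sum_range, add_assoc, Nat.add_sub_cancel_left]
  simp only [add_comm ℓ]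

section ShiftedSums

variable {f : ℕ → ℝ} {μ B : ℝ}

theorem summable_of_sum_range_shift_le_mul_add (hf : ∀ k, 0 ≤ f k) (hμ : μ < 1)
    (h : ∀ n, ∑ i ∈ range (n + 1), f (i + 1) ≤ μ * ∑ i ∈ range (n + 1), f i + B) :
    Summable f := by
  have hmono : ∀ n, ∑ i ∈ range n, f i ≤ ∑ i ∈ range (n + 1), f i := fun n => by
    rw [sum_range_succ]; linarith [hf n]
  have hbound : ∀ n, (1 - μ) * ∑ i ∈ range (n + 1), f i ≤ f 0 + B := fun n => by
    have hstep : ∑ i ∈ range (n + 2), f i ≤ f 0 + μ * ∑ i ∈ range (n + 1), f i + B := by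
      rw [sum_range_succ']; linarith [h n]
    linarith [hmono (n + 1)]
  exact summable_of_sum_range_le hf fun n =>
    (hmono n).trans ((le_div_iff₀' (by linarith)).2 (hbound n))

theorem tsum_shift_le_mul_add_of_sum_range_le (hf : Summable f)
    (h : ∀ n, ∑ i ∈ range (n + 1), f (i + 1) ≤ μ * ∑ i ∈ range (n + 1), f i + B) :
    ∑' k, f (k + 1) ≤ μ * ∑' k, f k + B := by
  have hshift := ((summable_nat_add_iff 1).2 hf).hasSum.tendsto_sum_nat
  have hsums := (hf.hasSum.tendsto_sum_nat.const_mul μ).add_const B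
  exact le_of_tendsto_of_tendsto' (hshift.comp (tendsto_add_atTop_nat 1))
    (hsums.comp (tendsto_add_atTop_nat 1)) h

end ShiftedSums

theorem stmt_5_general (η : ℕ → ℝ) (μ C : ℝ)
    (hη : ∀ k, 0 ≤ η k) (hμ1 : μ < 1) (hC : 0 ≤ C)
    (hsum : ∀ ℓ N : ℕ, ℓ ≤ N →
      ∑ k ∈ Finset.Icc ℓ N, η (k + 1) ≤ μ * ∑ k ∈ Finset.Icc ℓ N, η k + C * η ℓ) :
    Summable η ∧
      ∀ ℓ : ℕ, (∑' k : ℕ, η (k + (ℓ + 1))) ≤ ((μ + C) / (1 + C)) * ∑' k : ℕ, η (k + ℓ) := by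
  have hrange : ∀ ℓ n, ∑ i ∈ range (n + 1), η (i + 1 + ℓ)
      ≤ μ * ∑ i ∈ range (n + 1), η (i + ℓ) + C * η ℓ := fun ℓ n => by
    simpa only [sum_Icc_add_eq_sum_range, add_right_comm _ ℓ 1] using hsum ℓ (ℓ + n) le_self_add
  have hS : Summable η := summable_of_sum_range_shift_le_mul_add hη hμ1 (hrange 0)
  refine ⟨hS, fun ℓ => ?_⟩
  have htail := tsum_shift_le_mul_add_of_sum_range_le ((summable_nat_add_iff ℓ).2 hS) (hrange ℓ)
  have hsplit := ((summable_nat_add_iff ℓ).2 hS).tsum_eq_zero_add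
  simp only [zero_add, add_assoc, add_comm 1 ℓ] at htail hsplit
  rw [hsplit] at htail ⊢
  rw [div_mul_eq_mul_div, le_div_iff₀ (by linarith)]
  linarith

/-- geometric tail decay. Under the summed inequality, the tails
`α_ℓ = ∑_{k=ℓ}^∞ η_k` are finite and satisfy `α_{ℓ+1} ≤ ((μ+C)/(1+C)) * α_ℓ`. -/
theorem stmt_5 (η : ℕ → ℝ) (μ C : ℝ)
    (hη : ∀ k, 0 ≤ η k) (hμ0 : 0 ≤ μ) (hμ1 : μ < 1) (hC : 0 ≤ C)
    (hsum : ∀ ℓ N : ℕ, ℓ ≤ N →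
      ∑ k ∈ Finset.Icc ℓ N, η (k + 1) ≤ μ * ∑ k ∈ Finset.Icc ℓ N, η k + C * η ℓ) :
    Summable η ∧
      ∀ ℓ : ℕ, (∑' k : ℕ, η (k + (ℓ + 1))) ≤ ((μ + C) / (1 + C)) * ∑' k : ℕ, η (k + ℓ) :=
  stmt_5_general η μ C hη hμ1 hC hsum
end

section
/- Let (η_k)_{k∈ℕ} be a sequence of nonnegative real numbers, and let μ ∈ [0,1) and C ≥ 0 be constants such that ∑_{k=ℓ}^{N} η_{k+1} ≤ μ·∑_{k=ℓ}^{N} η_k + C·η_ℓ for all natural numbers ℓ ≤ N. Then η_k ≤ ((1+C)/(1−μ))·((μ+C)/(1+C))^{k−ℓ}·η_ℓ for all natural numbers k ≥ ℓ. -/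
/-!
Write `s a = ∑_{j=a}^{N} η_j` for the tail sums up to a fixed horizon `N`. Dropping the last term
`η_{N+1} ≥ 0` turns the summed inequality into `s (a+1) ≤ μ s a + C η_a`, and `η_a = s a - s (a+1)`.
This gives both `(1-μ) s a ≤ (1+C) η_a` and the contraction `(1+C) s (a+1) ≤ (μ+C) s a`.
With `N = k`, iterating the contraction from `ℓ` to `k` bounds `η_k = s k` by `((μ+C)/(1+C))^(k-ℓ) s ℓ`.
-/

open Finset

lemma Finset.sum_Icc_comp_add_one {M : Type*} [AddCommMonoid M] (f : ℕ → M) (a b : ℕ) :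
    ∑ j ∈ Icc a b, f (j + 1) = ∑ j ∈ Icc (a + 1) (b + 1), f j := by
  rw [← map_add_right_Icc, sum_map]
  rfl

lemma Finset.add_sum_Icc_add_one_eq_sum_Icc {M : Type*} [AddCommMonoid M] (f : ℕ → M) {a b : ℕ}
    (h : a ≤ b) : f a + ∑ j ∈ Icc (a + 1) b, f j = ∑ j ∈ Icc a b, f j := by
  rw [Icc_add_one_left_eq_Ioc, add_sum_Ioc_eq_sum_Icc h]

def SummedContraction (η : ℕ → ℝ) (μ C : ℝ) : Prop :=
  ∀ ℓ N : ℕ, ℓ ≤ N → ∑ k ∈ Icc ℓ N, η (k + 1) ≤ μ * ∑ k ∈ Icc ℓ N, η k + C * η ℓ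

namespace SummedContraction

variable {η : ℕ → ℝ} {μ C : ℝ}

lemma sum_Icc_add_one_le (h : SummedContraction η μ C) (hη : ∀ k, 0 ≤ η k) {a N : ℕ}
    (ha : a ≤ N) : ∑ j ∈ Icc (a + 1) N, η j ≤ μ * ∑ j ∈ Icc a N, η j + C * η a :=
  calc ∑ j ∈ Icc (a + 1) N, η j
      ≤ ∑ j ∈ Icc (a + 1) (N + 1), η j :=
        sum_le_sum_of_subset_of_nonneg (Icc_subset_Icc_right N.le_succ) fun j _ _ ↦ hη j
    _ = ∑ j ∈ Icc a N, η (j + 1) := (sum_Icc_comp_add_one η a N).symm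
    _ ≤ μ * ∑ j ∈ Icc a N, η j + C * η a := h a N ha

lemma sum_Icc_le (h : SummedContraction η μ C) (hη : ∀ k, 0 ≤ η k) (hμ : μ < 1) {a N : ℕ}
    (ha : a ≤ N) : ∑ j ∈ Icc a N, η j ≤ (1 + C) / (1 - μ) * η a := by
  have hsplit := add_sum_Icc_add_one_eq_sum_Icc η ha
  have hstep := h.sum_Icc_add_one_le hη ha
  rw [div_mul_eq_mul_div, le_div_iff₀ (sub_pos.2 hμ)]
  linarith

lemma sum_Icc_add_one_le_mul (h : SummedContraction η μ C) (hη : ∀ k, 0 ≤ η k) (hC : 0 ≤ C)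
    (a N : ℕ) : ∑ j ∈ Icc (a + 1) N, η j ≤ (μ + C) / (1 + C) * ∑ j ∈ Icc a N, η j := by
  rcases le_or_gt a N with ha | ha
  · have hsplit := add_sum_Icc_add_one_eq_sum_Icc η ha
    have hstep := h.sum_Icc_add_one_le hη ha
    rw [div_mul_eq_mul_div, le_div_iff₀ (by linarith)]
    linear_combination hstep + C * hsplit
  · simp [Icc_eq_empty_of_lt ha, Icc_eq_empty_of_lt (ha.trans a.lt_succ_self)]

end SummedContraction

/-- the summed inequality forces geometric decay of the estimator:
`η_k ≤ ((1+C)/(1-μ)) * ((μ+C)/(1+C))^(k-ℓ) * η_ℓ` for all `k ≥ ℓ`. -/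
theorem stmt_6 (η : ℕ → ℝ) (μ C : ℝ)
    (hη : ∀ k, 0 ≤ η k) (hμ0 : 0 ≤ μ) (hμ1 : μ < 1) (hC : 0 ≤ C)
    (hsum : ∀ ℓ N : ℕ, ℓ ≤ N →
      ∑ k ∈ Finset.Icc ℓ N, η (k + 1) ≤ μ * ∑ k ∈ Finset.Icc ℓ N, η k + C * η ℓ) :
    ∀ ℓ k : ℕ, ℓ ≤ k →
      η k ≤ ((1 + C) / (1 - μ)) * ((μ + C) / (1 + C)) ^ (k - ℓ) * η ℓ := by
  intro ℓ k hℓk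
  have hq : 0 ≤ (μ + C) / (1 + C) := by positivity
  have hdecay : ∑ j ∈ Icc k k, η j ≤ ((μ + C) / (1 + C)) ^ (k - ℓ) * ∑ j ∈ Icc ℓ k, η j := by
    have := le_geom (u := fun n ↦ ∑ j ∈ Icc (ℓ + n) k, η j) hq (k - ℓ)
      fun n _ ↦ SummedContraction.sum_Icc_add_one_le_mul hsum hη hC (ℓ + n) k
    simpa only [Nat.add_sub_cancel' hℓk, add_zero] using this
  calc η k = ∑ j ∈ Icc k k, η j := by rw [Icc_self, sum_singleton]
    _ ≤ ((μ + C) / (1 + C)) ^ (k - ℓ) * ∑ j ∈ Icc ℓ k, η j := hdecay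
    _ ≤ ((μ + C) / (1 + C)) ^ (k - ℓ) * ((1 + C) / (1 - μ) * η ℓ) := by
      gcongr
      exact SummedContraction.sum_Icc_le hsum hη hμ1 hℓk
    _ = ((1 + C) / (1 - μ)) * ((μ + C) / (1 + C)) ^ (k - ℓ) * η ℓ := by ring
end
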